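/- For real a > 0, y > 0 and complex b, c, p, λ, μ with Re(μ + p) > -1 and Re(λ) > Re(μ), the integral ∫₀^∞ x^{μ-1} (x + a + √(x² + 2ax))^{-λ} W_{p,b,c}(x y / (x + a + √(x² + 2ax))) dx equals the sum Σ_{k=0}^∞ [(-c)^k (y/2)^{2k+p+1} / (Γ(k + 3/2) Γ(k + p + (b+2)/2))] · ∫₀^∞ x^{μ+p+2k} (x + a + √(x² + 2ax))^{-(λ+p+1+2k)} dx, and each inner integral equals 2(λ+p+1+2k) a^{-(λ+p+1+2k)} (a/2)^{μ+p+1+2k} Γ(2μ+2p+2+4k) Γ(λ-μ) / Γ(1+λ+μ+2p+2+4k). -/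

import Mathlib

/-!
The substitution `x = a (1 - u)² / (2u)` maps `(0, 1)` onto `(0, ∞)` and turns
`T(x) = x + a + √(x² + 2ax)` into `a / u`, so Oberhettinger's integral
`∫₀^∞ x^(μ-1) T(x)^(-ν) dx` becomes `a^(-ν) (a/2)^μ (B(ν - μ, 2μ) + B(ν - μ + 1, 2μ))`,
which collapses to the stated Gamma quotient.

For the series, `x ≤ T(x)` bounds the `k`-th term of the expanded integrand by `‖c_k‖` times the
integrable `k = 0` kernel, where `c_k` are the coefficients of the Struve series at `y`. These are
absolutely summable by the ratio test (the two Gamma factors grow factorially), so summation and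
integration can be interchanged.
-/

open MeasureTheory Complex

/-- The generalized Struve function `W_{p,b,c}(z)`. -/
noncomputable def genStruve (p b c z : ℂ) : ℂ :=
  ∑' k : ℕ, (-c) ^ k * (z / 2) ^ (2 * (k : ℂ) + p + 1) /
    (Complex.Gamma ((k : ℂ) + 3 / 2) * Complex.Gamma ((k : ℂ) + p + (b + 2) / 2))

open Filter Set

theorem summable_pow_div_norm_Gamma_natCast_add (R : ℝ) (w : ℂ) :
    Summable fun k : ℕ => R ^ k / ‖Gamma (k + w)‖ := by
  refine summable_of_ratio_norm_eventually_le (r := 1 / 2) (by norm_num) ?_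
  filter_upwards [tendsto_natCast_atTop_atTop.eventually_ge_atTop (2 * |R| - w.re + 1)]
    with k hk
  have hre : 2 * |R| + 1 ≤ ((k : ℂ) + w).re := by simp only [add_re, natCast_re]; linarith
  have hkw : (k : ℂ) + w ≠ 0 := fun h => by
    simp only [h, zero_re] at hre; linarith [abs_nonneg R]
  have hnorm : 2 * |R| ≤ ‖(k : ℂ) + w‖ := by linarith [re_le_norm ((k : ℂ) + w)]
  have hratio : |R| / ‖(k : ℂ) + w‖ ≤ 1 / 2 := by
    rw [div_le_iff₀ (norm_pos_iff.mpr hkw)]; linarith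
  calc ‖R ^ (k + 1) / ‖Gamma ((k + 1 : ℕ) + w)‖‖
      = |R| / ‖(k : ℂ) + w‖ * ‖R ^ k / ‖Gamma (k + w)‖‖ := by
        rw [Nat.cast_succ, add_right_comm, Gamma_add_one _ hkw]
        simp only [norm_div, norm_pow, norm_mul, Real.norm_eq_abs, abs_norm]
        ring
    _ ≤ 1 / 2 * ‖R ^ k / ‖Gamma (k + w)‖‖ := by gcongr

theorem summable_pow_div_norm_Gamma_mul_Gamma (R : ℝ) (v w : ℂ) :
    Summable fun k : ℕ => R ^ k / (‖Gamma (k + v)‖ * ‖Gamma (k + w)‖) := by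
  have hv : Tendsto (fun k : ℕ => (1 : ℝ) ^ k / ‖Gamma (k + v)‖) atTop (nhds 0) :=
    (summable_pow_div_norm_Gamma_natCast_add 1 v).tendsto_atTop_zero
  refine (summable_pow_div_norm_Gamma_natCast_add R w).norm.of_norm_bounded_eventually_nat ?_
  filter_upwards [hv.eventually_le_const one_pos] with k hk
  rw [one_pow] at hk
  calc ‖R ^ k / (‖Gamma (k + v)‖ * ‖Gamma (k + w)‖)‖
      = 1 / ‖Gamma (k + v)‖ * ‖R ^ k / ‖Gamma (k + w)‖‖ := by
        simp only [norm_div, norm_mul, norm_norm]; ring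
    _ ≤ 1 * ‖R ^ k / ‖Gamma (k + w)‖‖ := by gcongr
    _ = ‖R ^ k / ‖Gamma (k + w)‖‖ := one_mul _

noncomputable def genStruveTerm (p b c z : ℂ) (k : ℕ) : ℂ :=
  (-c) ^ k * (z / 2) ^ (2 * (k : ℂ) + p + 1) /
    (Gamma ((k : ℂ) + 3 / 2) * Gamma ((k : ℂ) + p + (b + 2) / 2))

theorem genStruve_eq_tsum (p b c z : ℂ) : genStruve p b c z = ∑' k, genStruveTerm p b c z k :=
  rfl

theorem summable_norm_genStruveTerm (p b c : ℂ) {z : ℂ} (hz : z ≠ 0) :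
    Summable fun k => ‖genStruveTerm p b c z k‖ := by
  have hz2 : z / 2 ≠ 0 := div_ne_zero hz two_ne_zero
  have hterm : ∀ k : ℕ, ‖genStruveTerm p b c z k‖ = ‖(z / 2) ^ (p + 1)‖ *
      ((‖c‖ * ‖z / 2‖ ^ 2) ^ k /
        (‖Gamma (k + 3 / 2)‖ * ‖Gamma (k + (p + (b + 2) / 2))‖)) := by
    intro k
    rw [genStruveTerm, add_assoc (2 * (k : ℂ)), cpow_add _ _ hz2, mul_comm 2 (k : ℂ),
      cpow_nat_mul, cpow_two, ← add_assoc]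
    simp only [norm_div, norm_mul, norm_pow, norm_neg]
    ring
  simpa only [hterm] using
    (summable_pow_div_norm_Gamma_mul_Gamma _ (3 / 2) (p + (b + 2) / 2)).mul_left _

theorem cpow_mul_cpow_mul_genStruveTerm {x T y : ℝ} (hx : 0 < x) (hT : 0 < T) (hy : 0 ≤ y)
    (p b c μ ν : ℂ) (k : ℕ) :
    (x : ℂ) ^ (μ - 1) * (T : ℂ) ^ (-ν) * genStruveTerm p b c (x * y / T) k =
      genStruveTerm p b c y k * ((x : ℂ) ^ (μ + p + 2 * k) * (T : ℂ) ^ (-(ν + p + 1 + 2 * k))) := by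
  rw [genStruveTerm, genStruveTerm]
  set s := 2 * (k : ℂ) + p + 1
  have hx0 : (x : ℂ) ≠ 0 := ofReal_ne_zero.mpr hx.ne'
  have hT0 : (T : ℂ) ≠ 0 := ofReal_ne_zero.mpr hT.ne'
  have harg : ((x * y / T / 2 : ℂ)) ^ s = (x : ℂ) ^ s * ((y : ℂ) / 2) ^ s / (T : ℂ) ^ s := by
    rw [show (x * y / T / 2 : ℂ) = ((x * (y / 2) : ℝ) : ℂ) / (T : ℂ) by push_cast; ring,
      div_cpow_ofReal_nonneg (by positivity) hT.le, ofReal_mul,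
      mul_cpow_ofReal_nonneg hx.le (by positivity)]
    rw [ofReal_div, ofReal_ofNat]
  have hxpow : (x : ℂ) ^ (μ + p + 2 * k) = (x : ℂ) ^ (μ - 1) * (x : ℂ) ^ s := by
    rw [← cpow_add _ _ hx0]; congr 1; ring
  have hTpow : (T : ℂ) ^ (-(ν + p + 1 + 2 * k)) = (T : ℂ) ^ (-ν) / (T : ℂ) ^ s := by
    rw [div_eq_mul_inv, ← cpow_neg, ← cpow_add _ _ hT0]; congr 1; ring
  rw [harg, hxpow, hTpow]
  ring

theorem norm_cpow_add_mul_cpow_neg_add_le {x T : ℝ} (hx : 0 < x) (hxT : x ≤ T) (s t : ℂ)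
    {r : ℝ} (hr : 0 ≤ r) :
    ‖(x : ℂ) ^ (s + r) * (T : ℂ) ^ (-(t + r))‖ ≤ ‖(x : ℂ) ^ s * (T : ℂ) ^ (-t)‖ := by
  have hT : 0 < T := hx.trans_le hxT
  simp only [norm_mul, norm_cpow_eq_rpow_re_of_pos hx, norm_cpow_eq_rpow_re_of_pos hT, neg_re,
    add_re, ofReal_re]
  have hshift : x ^ (s.re + r) * T ^ (-(t.re + r)) = x ^ s.re * T ^ (-t.re) * (x ^ r / T ^ r) := by
    rw [Real.rpow_add hx, neg_add, Real.rpow_add hT, Real.rpow_neg hT.le r]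
    ring
  have hle : x ^ r / T ^ r ≤ 1 :=
    div_le_one_of_le₀ (Real.rpow_le_rpow hx.le hxT hr) (by positivity)
  rw [hshift]
  exact mul_le_of_le_one_right (by positivity) hle

noncomputable def oberhettingerBase (a x : ℝ) : ℝ := x + a + Real.sqrt (x ^ 2 + 2 * a * x)

noncomputable def oberhettingerSubst (a u : ℝ) : ℝ := a * (1 - u) ^ 2 / (2 * u)

section Oberhettinger

variable {a : ℝ} {p μ ν : ℂ}

theorem le_oberhettingerBase (ha : 0 ≤ a) (x : ℝ) : x ≤ oberhettingerBase a x := by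
  unfold oberhettingerBase; linarith [Real.sqrt_nonneg (x ^ 2 + 2 * a * x)]

theorem oberhettingerBase_pos (ha : 0 < a) {x : ℝ} (hx : 0 ≤ x) : 0 < oberhettingerBase a x := by
  unfold oberhettingerBase; positivity

theorem oberhettingerBase_oberhettingerSubst (ha : 0 < a) {u : ℝ} (hu : u ∈ Ioo (0 : ℝ) 1) :
    oberhettingerBase a (oberhettingerSubst a u) = a / u := by
  obtain ⟨hu0, hu1⟩ := hu
  have hsq : oberhettingerSubst a u ^ 2 + 2 * a * oberhettingerSubst a u =
      (a * (1 - u ^ 2) / (2 * u)) ^ 2 := by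
    unfold oberhettingerSubst; field_simp; ring
  have hpos : 0 ≤ a * (1 - u ^ 2) / (2 * u) := by
    have : 0 < 1 - u ^ 2 := by nlinarith
    positivity
  rw [oberhettingerBase, hsq, Real.sqrt_sq hpos, oberhettingerSubst]
  field_simp; ring

theorem hasDerivAt_oberhettingerSubst {u : ℝ} (hu : u ≠ 0) :
    HasDerivAt (oberhettingerSubst a) (-(a * (1 - u ^ 2) / (2 * u ^ 2))) u := by
  have hnum : HasDerivAt (fun u : ℝ => a * (1 - u) ^ 2) (a * (2 * (1 - u) * -1)) u := by
    simpa using (((hasDerivAt_id u).const_sub 1).pow 2).const_mul a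
  have hden : HasDerivAt (fun u : ℝ => 2 * u) 2 u := by
    simpa using (hasDerivAt_id u).const_mul 2
  exact (hnum.div hden (mul_ne_zero two_ne_zero hu)).congr_deriv (by field_simp; ring)

theorem injOn_oberhettingerSubst (ha : 0 < a) : InjOn (oberhettingerSubst a) (Ioo 0 1) := by
  intro u hu v hv huv
  have h := oberhettingerBase_oberhettingerSubst ha hu
  rw [huv, oberhettingerBase_oberhettingerSubst ha hv] at h
  rw [div_eq_div_iff hv.1.ne' hu.1.ne'] at h
  exact mul_left_cancel₀ ha.ne' h

theorem abs_neg_deriv_oberhettingerSubst (ha : 0 ≤ a) {u : ℝ} (hu : u ∈ Ioo (0 : ℝ) 1) :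
    |-(a * (1 - u ^ 2) / (2 * u ^ 2))| = a / 2 * (1 - u) * (1 + u) / u ^ 2 := by
  obtain ⟨hu0, hu1⟩ := hu
  have h1u2 : 0 ≤ 1 - u ^ 2 := by nlinarith
  rw [abs_neg, abs_of_nonneg (by positivity)]
  field_simp; ring

theorem ofReal_oberhettingerSubst_cpow (ha : 0 ≤ a) {u : ℝ} (hu : u ∈ Ioo (0 : ℝ) 1) (s : ℂ) :
    (oberhettingerSubst a u : ℂ) ^ s =
      ((a / 2 : ℝ) : ℂ) ^ s * (((1 - u : ℝ) : ℂ) ^ s * ((1 - u : ℝ) : ℂ) ^ s) / (u : ℂ) ^ s := by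
  obtain ⟨hu0, hu1⟩ := hu
  have hv : 0 ≤ 1 - u := by linarith
  rw [show oberhettingerSubst a u = a / 2 * ((1 - u) * (1 - u)) / u by
      rw [oberhettingerSubst]; ring,
    ofReal_div, div_cpow_ofReal_nonneg (by positivity) hu0.le, ofReal_mul,
    mul_cpow_ofReal_nonneg (by positivity) (by positivity), ofReal_mul,
    mul_cpow_ofReal_nonneg hv hv]

theorem abs_deriv_smul_oberhettingerIntegrand (ha : 0 < a) {u : ℝ}
    (hu : u ∈ Ioo (0 : ℝ) 1) :
    |-(a * (1 - u ^ 2) / (2 * u ^ 2))| •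
        ((oberhettingerSubst a u : ℂ) ^ (μ - 1) *
          (oberhettingerBase a (oberhettingerSubst a u) : ℂ) ^ (-ν)) =
      (a : ℂ) ^ (-ν) * ((a : ℂ) / 2) ^ μ *
        ((u : ℂ) ^ (ν - μ - 1) * (1 - (u : ℂ)) ^ (2 * μ - 1) +
          (u : ℂ) ^ (ν - μ + 1 - 1) * (1 - (u : ℂ)) ^ (2 * μ - 1)) := by
  rw [oberhettingerBase_oberhettingerSubst ha hu, abs_neg_deriv_oberhettingerSubst ha.le hu,
    ofReal_oberhettingerSubst_cpow ha.le hu, ofReal_div a u, div_cpow_ofReal_nonneg ha.le hu.1.le,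
    real_smul]
  obtain ⟨hu0, hu1⟩ := hu
  set A := a / 2 with hA
  set v := 1 - u with hv
  have hv0 : 0 < v := by linarith
  have hA0 : (A : ℂ) ≠ 0 := ofReal_ne_zero.mpr (by positivity)
  have hv0' : (v : ℂ) ≠ 0 := ofReal_ne_zero.mpr hv0.ne'
  have hu0' : (u : ℂ) ≠ 0 := ofReal_ne_zero.mpr hu0.ne'
  have hApow : ((a : ℂ) / 2) ^ μ = (A : ℂ) ^ (μ - 1) * A := by
    rw [show (a : ℂ) / 2 = A by rw [hA]; push_cast; ring]
    nth_rewrite 1 [show μ = μ - 1 + 1 by ring]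
    rw [cpow_add _ _ hA0, cpow_one]
  have hvpow : (1 - (u : ℂ)) ^ (2 * μ - 1) = (v : ℂ) ^ (μ - 1) * (v : ℂ) ^ (μ - 1) * v := by
    rw [show 1 - (u : ℂ) = v by rw [hv]; push_cast; ring,
      show 2 * μ - 1 = μ - 1 + (μ - 1) + 1 by ring,
      cpow_add _ _ hv0', cpow_add _ _ hv0', cpow_one]
  have hupow₁ : (u : ℂ) ^ (ν - μ - 1) =
      ((u : ℂ) ^ (-ν))⁻¹ * ((u : ℂ) ^ (μ - 1))⁻¹ * ((u : ℂ) ^ 2)⁻¹ := by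
    rw [← cpow_neg, ← cpow_neg, ← cpow_natCast, ← cpow_neg, ← cpow_add _ _ hu0',
      ← cpow_add _ _ hu0']
    congr 1; push_cast; ring
  have hupow₂ : (u : ℂ) ^ (ν - μ + 1 - 1) =
      ((u : ℂ) ^ (-ν))⁻¹ * ((u : ℂ) ^ (μ - 1))⁻¹ * (u : ℂ)⁻¹ := by
    rw [← cpow_neg, ← cpow_neg, ← cpow_neg_one, ← cpow_add _ _ hu0', ← cpow_add _ _ hu0']
    congr 1; ring
  rw [hApow, hvpow, hupow₁, hupow₂]
  have hune : (u : ℂ) ^ (-ν) ≠ 0 := cpow_ne_zero_iff.mpr (Or.inl hu0')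
  have hune' : (u : ℂ) ^ (μ - 1) ≠ 0 := cpow_ne_zero_iff.mpr (Or.inl hu0')
  push_cast
  field_simp

theorem image_oberhettingerSubst (ha : 0 < a) : oberhettingerSubst a '' Ioo 0 1 = Ioi 0 := by
  refine Subset.antisymm ?_ fun x (hx : 0 < x) => ?_
  · rintro _ ⟨u, ⟨hu0, hu1⟩, rfl⟩
    have : 0 < 1 - u := by linarith
    exact show 0 < oberhettingerSubst a u by unfold oberhettingerSubst; positivity
  set r := Real.sqrt (x ^ 2 + 2 * a * x)
  have hr : r ^ 2 = x ^ 2 + 2 * a * x := Real.sq_sqrt (by positivity)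
  have hr0 : 0 ≤ r := Real.sqrt_nonneg _
  have hT : a < oberhettingerBase a x := by unfold oberhettingerBase; linarith
  have hT0 : 0 < oberhettingerBase a x := ha.trans hT
  refine ⟨a / oberhettingerBase a x, ⟨by positivity, (div_lt_one hT0).mpr hT⟩, ?_⟩
  have hsq : (oberhettingerBase a x - a) ^ 2 = 2 * x * oberhettingerBase a x := by
    unfold oberhettingerBase; linear_combination hr
  rw [oberhettingerSubst]
  field_simp
  linear_combination hsq

theorem betaIntegral_add_betaIntegral_add_one {u v : ℂ} (hu : 0 < u.re) (hv : 0 < v.re) :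
    betaIntegral u v + betaIntegral (u + 1) v =
      (2 * u + v) * Gamma u * Gamma v / Gamma (u + v + 1) := by
  have huv : 0 < (u + v).re := by rw [add_re]; linarith
  have huv0 : u + v ≠ 0 := fun h => by simp [h] at huv
  have hu0 : u ≠ 0 := fun h => by simp [h] at hu
  have hΓ : Gamma (u + v) ≠ 0 := Gamma_ne_zero_of_re_pos huv
  have h₁ := Gamma_mul_Gamma_eq_betaIntegral hu hv
  have hu₁ : 0 < (u + 1).re := by rw [add_re, one_re]; linarith
  have h₂ := Gamma_mul_Gamma_eq_betaIntegral hu₁ hv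
  rw [add_right_comm, Gamma_add_one _ huv0, Gamma_add_one _ hu0] at h₂
  rw [Gamma_add_one _ huv0, eq_div_iff (mul_ne_zero huv0 hΓ)]
  linear_combination -(u + v) * h₁ - h₂

theorem integral_Ioo_eq_betaIntegral (u v : ℂ) :
    ∫ x in Ioo (0 : ℝ) 1, (x : ℂ) ^ (u - 1) * (1 - (x : ℂ)) ^ (v - 1) = betaIntegral u v := by
  rw [betaIntegral, intervalIntegral.integral_of_le zero_le_one, integral_Ioc_eq_integral_Ioo]

theorem integrableOn_Ioo_betaIntegrand {u v : ℂ} (hu : 0 < u.re) (hv : 0 < v.re) :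
    IntegrableOn (fun x : ℝ => (x : ℂ) ^ (u - 1) * (1 - (x : ℂ)) ^ (v - 1)) (Ioo 0 1) :=
  ((intervalIntegrable_iff_integrableOn_Ioc_of_le zero_le_one).mp
    (betaIntegral_convergent hu hv)).mono_set Ioo_subset_Ioc_self

theorem integrableOn_oberhettinger (ha : 0 < a) (hμ : 0 < μ.re) (hμν : μ.re < ν.re) :
    IntegrableOn (fun x : ℝ => (x : ℂ) ^ (μ - 1) * (oberhettingerBase a x : ℂ) ^ (-ν)) (Ioi 0) := by
  have hνμ : 0 < (ν - μ).re := by rw [sub_re]; linarith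
  have hνμ₁ : 0 < (ν - μ + 1).re := by rw [add_re, one_re]; linarith
  have h2μ : 0 < (2 * μ).re := by simpa using hμ
  rw [← image_oberhettingerSubst ha, integrableOn_image_iff_integrableOn_abs_deriv_smul
    measurableSet_Ioo (fun u hu => (hasDerivAt_oberhettingerSubst hu.1.ne').hasDerivWithinAt)
    (injOn_oberhettingerSubst ha)]
  refine IntegrableOn.congr_fun ?_
    (fun u hu => (abs_deriv_smul_oberhettingerIntegrand ha hu).symm) measurableSet_Ioo
  exact ((integrableOn_Ioo_betaIntegrand hνμ h2μ).add
    (integrableOn_Ioo_betaIntegrand hνμ₁ h2μ)).const_mul _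

theorem integral_oberhettinger (ha : 0 < a) (hμ : 0 < μ.re) (hμν : μ.re < ν.re) :
    ∫ x in Ioi (0 : ℝ), (x : ℂ) ^ (μ - 1) * (oberhettingerBase a x : ℂ) ^ (-ν) =
      2 * ν * (a : ℂ) ^ (-ν) * ((a : ℂ) / 2) ^ μ * Gamma (2 * μ) * Gamma (ν - μ) /
        Gamma (1 + ν + μ) := by
  have hνμ : 0 < (ν - μ).re := by rw [sub_re]; linarith
  have hνμ₁ : 0 < (ν - μ + 1).re := by rw [add_re, one_re]; linarith
  have h2μ : 0 < (2 * μ).re := by simpa using hμ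
  rw [← image_oberhettingerSubst ha, integral_image_eq_integral_abs_deriv_smul
    measurableSet_Ioo (fun u hu => (hasDerivAt_oberhettingerSubst hu.1.ne').hasDerivWithinAt)
    (injOn_oberhettingerSubst ha),
    setIntegral_congr_fun measurableSet_Ioo fun u hu =>
      abs_deriv_smul_oberhettingerIntegrand ha hu,
    integral_const_mul, integral_add (integrableOn_Ioo_betaIntegrand hνμ h2μ)
      (integrableOn_Ioo_betaIntegrand hνμ₁ h2μ), integral_Ioo_eq_betaIntegral,
    integral_Ioo_eq_betaIntegral, betaIntegral_add_betaIntegral_add_one hνμ h2μ,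
    show ν - μ + 2 * μ + 1 = 1 + ν + μ by ring]
  ring

theorem re_shift_pos_lt (hμp : -1 < (μ + p).re) (hμν : μ.re < ν.re) (k : ℕ) :
    0 < (μ + p + 1 + 2 * (k : ℂ)).re ∧
      (μ + p + 1 + 2 * (k : ℂ)).re < (ν + p + 1 + 2 * (k : ℂ)).re := by
  simp only [add_re, mul_re, natCast_re, natCast_im, re_ofNat, im_ofNat, one_re] at hμp ⊢
  constructor <;> nlinarith [(k.cast_nonneg : (0 : ℝ) ≤ k)]

theorem integrableOn_oberhettinger_shift (ha : 0 < a) (hμp : -1 < (μ + p).re)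
    (hμν : μ.re < ν.re) (k : ℕ) :
    IntegrableOn (fun x : ℝ => (x : ℂ) ^ (μ + p + 2 * (k : ℂ)) *
      (oberhettingerBase a x : ℂ) ^ (-(ν + p + 1 + 2 * (k : ℂ)))) (Ioi 0) := by
  obtain ⟨hpos, hlt⟩ := re_shift_pos_lt hμp hμν k
  simpa only [show μ + p + 1 + 2 * (k : ℂ) - 1 = μ + p + 2 * k by ring] using
    integrableOn_oberhettinger ha hpos hlt

theorem integral_oberhettinger_shift (ha : 0 < a) (hμp : -1 < (μ + p).re)
    (hμν : μ.re < ν.re) (k : ℕ) :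
    ∫ x in Ioi (0 : ℝ), (x : ℂ) ^ (μ + p + 2 * (k : ℂ)) *
        (oberhettingerBase a x : ℂ) ^ (-(ν + p + 1 + 2 * (k : ℂ))) =
      2 * (ν + p + 1 + 2 * (k : ℂ)) * (a : ℂ) ^ (-(ν + p + 1 + 2 * (k : ℂ))) *
        ((a : ℂ) / 2) ^ (μ + p + 1 + 2 * (k : ℂ)) *
        Gamma (2 * μ + 2 * p + 2 + 4 * (k : ℂ)) * Gamma (ν - μ) /
        Gamma (1 + ν + μ + 2 * p + 2 + 4 * (k : ℂ)) := by
  obtain ⟨hpos, hlt⟩ := re_shift_pos_lt hμp hμν k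
  rw [show μ + p + 2 * (k : ℂ) = μ + p + 1 + 2 * k - 1 by ring, integral_oberhettinger ha hpos hlt]
  congr 2 <;> ring_nf

theorem integral_cpow_mul_genStruve_eq_tsum (ha : 0 < a) {y : ℝ} (hy : 0 < y) (b c : ℂ)
    (hμp : -1 < (μ + p).re) (hμν : μ.re < ν.re) :
    ∫ x in Ioi (0 : ℝ), (x : ℂ) ^ (μ - 1) * (oberhettingerBase a x : ℂ) ^ (-ν) *
        genStruve p b c (x * y / oberhettingerBase a x) =
      ∑' k, genStruveTerm p b c y k * ∫ x in Ioi (0 : ℝ), (x : ℂ) ^ (μ + p + 2 * (k : ℂ)) *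
        (oberhettingerBase a x : ℂ) ^ (-(ν + p + 1 + 2 * (k : ℂ))) := by
  set K : ℕ → ℝ → ℂ := fun k x =>
    (x : ℂ) ^ (μ + p + 2 * (k : ℂ)) * (oberhettingerBase a x : ℂ) ^ (-(ν + p + 1 + 2 * (k : ℂ)))
  have hKint : ∀ k, IntegrableOn (K k) (Ioi 0) := integrableOn_oberhettinger_shift ha hμp hμν
  have hseries : ∀ x ∈ Ioi (0 : ℝ), (x : ℂ) ^ (μ - 1) * (oberhettingerBase a x : ℂ) ^ (-ν) *
      genStruve p b c (x * y / oberhettingerBase a x) =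
        ∑' k, genStruveTerm p b c y k * K k x := fun x (hx : 0 < x) => by
    rw [genStruve_eq_tsum, ← tsum_mul_left]
    exact tsum_congr fun k =>
      cpow_mul_cpow_mul_genStruveTerm hx (oberhettingerBase_pos ha hx.le) hy.le p b c μ ν k
  have hdom : ∀ k, ∀ x ∈ Ioi (0 : ℝ), ‖K k x‖ ≤ ‖K 0 x‖ := fun k x (hx : 0 < x) => by
    simpa [K] using norm_cpow_add_mul_cpow_neg_add_le hx (le_oberhettingerBase ha.le x)
      (μ + p) (ν + p + 1) (r := 2 * k) (by positivity)
  have hsum : Summable fun k => ∫ x in Ioi (0 : ℝ), ‖genStruveTerm p b c y k * K k x‖ := by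
    refine .of_nonneg_of_le (fun k => integral_nonneg fun _ => norm_nonneg _) (fun k => ?_)
      ((summable_norm_genStruveTerm p b c (ofReal_ne_zero.mpr hy.ne')).mul_right
        (∫ x in Ioi (0 : ℝ), ‖K 0 x‖))
    simp only [norm_mul, integral_const_mul]
    exact mul_le_mul_of_nonneg_left
      (setIntegral_mono_on (hKint k).norm (hKint 0).norm measurableSet_Ioi (hdom k))
      (norm_nonneg _)
  rw [setIntegral_congr_fun measurableSet_Ioi hseries,
    ← integral_tsum_of_summable_integral_norm (fun k => (hKint k).const_mul _) hsum]
  exact tsum_congr fun k => integral_const_mul _ _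

end Oberhettinger

theorem integral_genStruve_oberhettinger₂ (a y : ℝ) (ha : 0 < a) (hy : 0 < y)
    (b c p l m : ℂ) (hmp : -1 < (m + p).re) (hlm : m.re < l.re) :
    (∫ x in Set.Ioi (0 : ℝ),
        (x : ℂ) ^ (m - 1) *
          ((x + a + Real.sqrt (x ^ 2 + 2 * a * x) : ℝ) : ℂ) ^ (-l) *
          genStruve p b c
            ((x : ℂ) * (y : ℂ) / ((x + a + Real.sqrt (x ^ 2 + 2 * a * x) : ℝ) : ℂ))) =
      (∑' k : ℕ,
        ((-c) ^ k * ((y : ℂ) / 2) ^ (2 * (k : ℂ) + p + 1) /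
            (Complex.Gamma ((k : ℂ) + 3 / 2) *
              Complex.Gamma ((k : ℂ) + p + (b + 2) / 2))) *
          ∫ x in Set.Ioi (0 : ℝ),
            (x : ℂ) ^ (m + p + 2 * (k : ℂ)) *
              ((x + a + Real.sqrt (x ^ 2 + 2 * a * x) : ℝ) : ℂ) ^
                (-(l + p + 1 + 2 * (k : ℂ)))) ∧
      ∀ k : ℕ,
        (∫ x in Set.Ioi (0 : ℝ),
            (x : ℂ) ^ (m + p + 2 * (k : ℂ)) *
              ((x + a + Real.sqrt (x ^ 2 + 2 * a * x) : ℝ) : ℂ) ^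
                (-(l + p + 1 + 2 * (k : ℂ)))) =
          2 * (l + p + 1 + 2 * (k : ℂ)) * (a : ℂ) ^ (-(l + p + 1 + 2 * (k : ℂ))) *
            ((a : ℂ) / 2) ^ (m + p + 1 + 2 * (k : ℂ)) *
            Complex.Gamma (2 * m + 2 * p + 2 + 4 * (k : ℂ)) * Complex.Gamma (l - m) /
            Complex.Gamma (1 + l + m + 2 * p + 2 + 4 * (k : ℂ)) := by
  simp only [show ∀ x : ℝ, x + a + Real.sqrt (x ^ 2 + 2 * a * x) = oberhettingerBase a x from
    fun _ => rfl]
  exact ⟨integral_cpow_mul_genStruve_eq_tsum ha hy b c hmp hlm,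
    integral_oberhettinger_shift ha hmp hlm⟩
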